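/- arXiv:1808.10056 — 2 statements merged into one kernel-verified Lean document; each statement's English description precedes it below -/
import Mathlib

section
/- For arbitrary input data streams X, the online change-point detector OnlinePCPD(X, P_0, P_1, ε, n, T) — which runs AboveThresh with threshold noise Lap(4A/ε) and per-query noise Lap(8A/ε) on the windowed queries ℓ_j = max_{j−n+1≤k≤j} ℓ(k), and upon exceeding the noisy threshold outputs OfflinePCPD on the current window of size n with privacy parameter ε/2 — is (ε,0)-differentially private: for any two neighboring streams X, X' and any set S of possible outputs, Pr[OnlinePCPD(X) ∈ S] ≤ e^ε · Pr[OnlinePCPD(X') ∈ S]. -/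
open MeasureTheory ProbabilityTheory

/-- The Laplace distribution with scale `b`, with density `(1/(2b)) exp (-|x|/b)`. -/
noncomputable def laplaceMeasure (b : ℝ) : Measure ℝ :=
  volume.withDensity fun x => ENNReal.ofReal (Real.exp (-|x| / b) / (2 * b))

/-- `P` is a probability density on `ℝ`. -/
structure IsDensity (P : ℝ → ℝ) : Prop where
  measurable : Measurable P
  nonneg : ∀ x, 0 ≤ P x
  integral_one : ∫ x, P x = 1

/-- Partial log-likelihood ratio `ℓ(k) = ∑_{i=k}^j log (P₁ x_i / P₀ x_i)` for the
stream `X` at current time `j`. -/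
noncomputable def ell (P₀ P₁ : ℝ → ℝ) (X : ℕ → ℝ) (k j : ℕ) : ℝ :=
  ∑ m ∈ Finset.Icc k j, Real.log (P₁ (X m) / P₀ (X m))

/-- The `AboveThresh` test of `OnlinePCPD` fires at time `j`: the (noisy) windowed
statistic `ℓ_j = max_{j-n+1 ≤ k ≤ j} ℓ(k)` plus noise `Zω` exceeds the noisy threshold
`T + νω`.  (The maximum exceeds the threshold iff some term does.) -/
def Triggers (P₀ P₁ : ℝ → ℝ) (X : ℕ → ℝ) (n : ℕ) (T νω Zω : ℝ) (j : ℕ) : Prop :=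
  ∃ k ∈ Finset.Icc (j - n + 1) j, T + νω < ell P₀ P₁ X k j + Zω

/-- `OnlinePCPD` halts at time `j`: the test fires at `j` and at no earlier time. -/
def HaltsAt {Ω : Type*} (P₀ P₁ : ℝ → ℝ) (X : ℕ → ℝ) (n : ℕ) (T : ℝ)
    (ν : Ω → ℝ) (Z : ℕ → Ω → ℝ) (j : ℕ) (ω : Ω) : Prop :=
  n ≤ j ∧ Triggers P₀ P₁ X n T (ν ω) (Z j ω) j ∧
    ∀ j', n ≤ j' → j' < j → ¬ Triggers P₀ P₁ X n T (ν ω) (Z j' ω) j'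

/-!
The output of `OnlinePCPD` is a deterministic function of the noise vector `(ν, Z, W)`, whose
law is a product of Laplace laws. Changing one entry of the stream moves every `ℓ(k)`, and every
difference `ℓ(k) - ℓ(k')`, by at most `A`. Hence shifting a noise vector that makes the run on `X`
output `(j, c)` by `A` in the threshold noise, by `2A` in the query noise at time `j` and by `A`
in the offline noise at position `c` makes the run on `X'` output `(j, c)`. Shifting a Laplace
coordinate of scale `b` by `t` costs a factor `exp (|t| / b)`, and the three scales give
`ε/4 + ε/4 + ε/2 = ε`. Ties in the offline argmax have probability zero, so summing over the
disjoint output events gives the bound.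
-/

lemma laplaceMeasure_eq_zero_of_nonpos {b : ℝ} (hb : b ≤ 0) : laplaceMeasure b = 0 := by
  have hdens : (fun x : ℝ => ENNReal.ofReal (Real.exp (-|x| / b) / (2 * b))) = 0 := by
    funext x
    exact ENNReal.ofReal_eq_zero.mpr
      (div_nonpos_of_nonneg_of_nonpos (Real.exp_nonneg _) (by linarith))
  rw [laplaceMeasure, hdens, withDensity_zero]

lemma pos_of_map_eq_laplaceMeasure {Ω : Type*} [MeasurableSpace Ω] {μ : Measure Ω}
    [IsProbabilityMeasure μ] {f : Ω → ℝ} (hf : AEMeasurable f μ) {b : ℝ}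
    (hlaw : μ.map f = laplaceMeasure b) : 0 < b := by
  by_contra! hb
  have := Measure.isProbabilityMeasure_map hf
  rw [hlaw, laplaceMeasure_eq_zero_of_nonpos hb] at this
  exact IsProbabilityMeasure.ne_zero (0 : Measure ℝ) rfl

instance (b : ℝ) : NullSingletonClass (laplaceMeasure b) :=
  inferInstanceAs (NullSingletonClass (volume.withDensity _))

lemma laplace_density_sub_le {b : ℝ} (hb : 0 < b) (x t : ℝ) :
    Real.exp (-|x - t| / b) / (2 * b) ≤ Real.exp (|t| / b) * (Real.exp (-|x| / b) / (2 * b)) := by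
  rw [← mul_div_assoc, ← Real.exp_add, ← add_div]
  gcongr
  linarith [abs_sub_abs_le_abs_sub x t]

lemma laplaceMeasure_preimage_add_le {b : ℝ} (hb : 0 < b) (t : ℝ) {B : Set ℝ}
    (hB : MeasurableSet B) :
    laplaceMeasure b ((· + t) ⁻¹' B)
      ≤ ENNReal.ofReal (Real.exp (|t| / b)) * laplaceMeasure b B := by
  set dens := fun x : ℝ => ENNReal.ofReal (Real.exp (-|x| / b) / (2 * b))
  have hdens : Measurable dens := by fun_prop
  have htrans := (measurePreserving_add_right volume t).setLIntegral_comp_preimage hB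
    (f := fun y => dens (y - t)) (by fun_prop)
  simp only [add_sub_cancel_right] at htrans
  rw [laplaceMeasure, withDensity_apply _ (hB.preimage (by fun_prop)), withDensity_apply _ hB,
    htrans, ← lintegral_const_mul _ hdens]
  refine setLIntegral_mono (by fun_prop) fun x _ => ?_
  rw [← ENNReal.ofReal_mul (Real.exp_nonneg _)]
  exact ENNReal.ofReal_le_ofReal (laplace_density_sub_le hb x t)

namespace ProbabilityTheory

variable {Ω : Type*} [MeasurableSpace Ω] {μ : Measure Ω}

lemma IndepFun.measure_prodMk_add_le [IsFiniteMeasure μ] {γ : Type*} [MeasurableSpace γ]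
    {g : Ω → γ} {f : Ω → ℝ} (hg : Measurable g) (hf : Measurable f) (hgf : IndepFun g f μ)
    {b : ℝ} (hb : 0 < b) (hlaw : μ.map f = laplaceMeasure b) (t : ℝ)
    {D : Set (γ × ℝ)} (hD : MeasurableSet D) :
    μ {ω | (g ω, f ω + t) ∈ D} ≤ ENNReal.ofReal (Real.exp (|t| / b)) * μ {ω | (g ω, f ω) ∈ D} := by
  have hmap := (indepFun_iff_map_prod_eq_prod_map_map hg.aemeasurable hf.aemeasurable).mp hgf
  have hDt : MeasurableSet ((fun p : γ × ℝ => (p.1, p.2 + t)) ⁻¹' D) := hD.preimage (by fun_prop)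
  have hpair : Measurable fun ω => (g ω, f ω) := hg.prodMk hf
  change μ ((fun ω => (g ω, f ω)) ⁻¹' ((fun p : γ × ℝ => (p.1, p.2 + t)) ⁻¹' D))
    ≤ _ * μ ((fun ω => (g ω, f ω)) ⁻¹' D)
  rw [← Measure.map_apply hpair hDt, ← Measure.map_apply hpair hD, hmap, Measure.prod_apply hDt,
    Measure.prod_apply hD, ← lintegral_const_mul' _ _ ENNReal.ofReal_ne_top]
  refine lintegral_mono fun x => ?_
  rw [hlaw]
  exact laplaceMeasure_preimage_add_le hb t (measurable_prodMk_left hD)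

lemma IndepFun.measure_setOf_sub_eq_eq_zero [IsFiniteMeasure μ] {f g : Ω → ℝ} (hf : Measurable f)
    (hg : Measurable g) (hfg : IndepFun f g μ) [NullSingletonClass (μ.map g)] (a : ℝ) :
    μ {ω | f ω - g ω = a} = 0 := by
  have hmap := (indepFun_iff_map_prod_eq_prod_map_map hf.aemeasurable hg.aemeasurable).mp hfg
  have hD : MeasurableSet {p : ℝ × ℝ | p.1 - p.2 = a} :=
    measurableSet_eq_fun (by fun_prop) (by fun_prop)
  change μ ((fun ω => (f ω, g ω)) ⁻¹' {p : ℝ × ℝ | p.1 - p.2 = a}) = 0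
  rw [← Measure.map_apply (hf.prodMk hg) hD, hmap, Measure.measure_prod_null hD]
  refine Filter.Eventually.of_forall fun x => ?_
  have hslice : Prod.mk x ⁻¹' {p : ℝ × ℝ | p.1 - p.2 = a} = {x - a} := by
    ext y
    simp only [Set.mem_preimage, Set.mem_ofPred_eq, Set.mem_singleton_iff]
    constructor <;> intro h <;> linarith
  simp [hslice]

variable {ι : Type*} {F : ι → Ω → ℝ}

lemma iIndepFun.indepFun_restrict_compl (hF : ∀ i, Measurable (F i)) (hind : iIndepFun F μ)
    (i₀ : ι) : IndepFun (fun ω (i : {i // i ≠ i₀}) => F i ω) (F i₀) μ := by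
  rw [IndepFun_iff_Indep]
  have h := indep_iSup_of_disjoint (fun i => (hF i).comap_le)
    ((iIndepFun_iff_iIndep _ _ _).mp hind)
    (disjoint_compl_left (a := ({i₀} : Set ι)))
  refine indep_of_indep_of_le_right (indep_of_indep_of_le_left h ?_) ?_
  · refine Measurable.comap_le (@measurable_pi_lambda _ _ _ (_) _ _ fun i => ?_)
    exact (comap_measurable (F i)).mono (le_iSup₂ (f := fun i (_ : i ∈ ({i₀} : Set ι)ᶜ) =>
      MeasurableSpace.comap (F i) inferInstance) i i.2) le_rfl
  · exact le_iSup₂ (f := fun i (_ : i ∈ ({i₀} : Set ι)) =>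
      MeasurableSpace.comap (F i) inferInstance) i₀ rfl

lemma iIndepFun.measure_update_add_le [IsFiniteMeasure μ] [DecidableEq ι]
    (hF : ∀ i, Measurable (F i)) (hind : iIndepFun F μ) {i₀ : ι} {b : ℝ} (hb : 0 < b)
    (hlaw : μ.map (F i₀) = laplaceMeasure b) (a : ℝ) {D : Set (ι → ℝ)} (hD : MeasurableSet D) :
    μ {ω | Function.update (fun i => F i ω) i₀ (F i₀ ω + a) ∈ D}
      ≤ ENNReal.ofReal (Real.exp (|a| / b)) * μ {ω | (fun i => F i ω) ∈ D} := by
  let glue : ({i // i ≠ i₀} → ℝ) × ℝ → ι → ℝ := fun p i => if h : i = i₀ then p.2 else p.1 ⟨i, h⟩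
  have hglue : Measurable glue := measurable_pi_lambda _ fun i => by
    by_cases h : i = i₀
    · simpa [glue, h] using measurable_snd
    · simp only [glue, h, dite_false]
      fun_prop
  have hglue_eq : ∀ ω x, glue ((fun i : {i // i ≠ i₀} => F i ω), x)
      = Function.update (fun i => F i ω) i₀ x := by
    intro ω x
    funext i
    by_cases h : i = i₀
    · subst h; simp [glue]
    · simp [glue, h]
  have := (hind.indepFun_restrict_compl hF i₀).measure_prodMk_add_le
    (measurable_pi_lambda _ fun i => hF i.1) (hF i₀) hb hlaw a (hglue hD)
  simpa only [Set.mem_preimage, hglue_eq, Function.update_eq_self] using this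

lemma iIndepFun.measure_add_le [IsFiniteMeasure μ] (hF : ∀ i, Measurable (F i))
    (hind : iIndepFun F μ) (s : Finset ι) {b : ι → ℝ} (hb : ∀ i ∈ s, 0 < b i)
    (hlaw : ∀ i ∈ s, μ.map (F i) = laplaceMeasure (b i)) {t : ι → ℝ} (ht : ∀ i ∉ s, t i = 0)
    {D : Set (ι → ℝ)} (hD : MeasurableSet D) :
    μ {ω | (fun i => F i ω + t i) ∈ D}
      ≤ ENNReal.ofReal (Real.exp (∑ i ∈ s, |t i| / b i)) * μ {ω | (fun i => F i ω) ∈ D} := by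
  classical
  induction s using Finset.induction_on generalizing t D with
  | empty =>
    have ht0 : t = 0 := funext fun i => ht i (Finset.notMem_empty i)
    simp [ht0]
  | insert i s hi ih =>
    set t' := Function.update t i 0
    have ht' : ∀ k ∉ s, t' k = 0 := by
      intro k hk
      by_cases hki : k = i
      · simp [t', hki]
      · simp [t', hki, ht k (by simp [hki, hk])]
    have hsplit : ∀ ω, (fun k => F k ω + t k)
        = (fun k => Function.update (fun k => F k ω) i (F i ω + t i) k + t' k) := by
      intro ω
      funext k
      by_cases hki : k = i
      · subst hki; simp [t']
      · simp [t', hki]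
    have hsum : ∑ k ∈ s, |t' k| / b k = ∑ k ∈ s, |t k| / b k :=
      Finset.sum_congr rfl fun k hk => by simp [t', ne_of_mem_of_not_mem hk hi]
    calc μ {ω | (fun k => F k ω + t k) ∈ D}
        = μ {ω | Function.update (fun k => F k ω) i (F i ω + t i) ∈ (· + t') ⁻¹' D} := by
          simp only [hsplit]; rfl
      _ ≤ ENNReal.ofReal (Real.exp (|t i| / b i)) * μ {ω | (fun k => F k ω + t' k) ∈ D} :=
          hind.measure_update_add_le hF (hb i (Finset.mem_insert_self i s))
            (hlaw i (Finset.mem_insert_self i s)) _ (hD.preimage (by fun_prop))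
      _ ≤ ENNReal.ofReal (Real.exp (|t i| / b i)) *
            (ENNReal.ofReal (Real.exp (∑ k ∈ s, |t' k| / b k)) * μ {ω | (fun k => F k ω) ∈ D}) := by
          gcongr
          exact ih (fun k hk => hb k (Finset.mem_insert_of_mem hk))
            (fun k hk => hlaw k (Finset.mem_insert_of_mem hk)) ht' hD
      _ = ENNReal.ofReal (Real.exp (∑ k ∈ insert i s, |t k| / b k)) *
            μ {ω | (fun k => F k ω) ∈ D} := by
          rw [Finset.sum_insert hi, hsum, Real.exp_add, ENNReal.ofReal_mul (Real.exp_nonneg _),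
            mul_assoc]

end ProbabilityTheory

lemma abs_sub_le_csSup_sub_csInf {α : Type*} {f : α → ℝ} (hbdd₁ : BddBelow (Set.range f))
    (hbdd₂ : BddAbove (Set.range f)) (x y : α) :
    |f x - f y| ≤ sSup (Set.range f) - sInf (Set.range f) := by
  have hb : Bornology.IsBounded (Set.range f) := isBounded_iff_bddBelow_bddAbove.mpr ⟨hbdd₁, hbdd₂⟩
  rw [← Real.diam_eq hb, ← Real.dist_eq]
  exact Metric.dist_le_diam_of_mem hb ⟨x, rfl⟩ ⟨y, rfl⟩

lemma measure_le_mul_of_subset_biUnion {α ι : Type*} [MeasurableSpace α] {μ : Measure α}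
    {s : Set ι} (hs : s.Countable) {f g : ι → Set α} {E E' N : Set α} {a : ENNReal}
    (hE : E ⊆ (⋃ i ∈ s, f i) ∪ N) (hN : μ N = 0) (hfg : ∀ i ∈ s, μ (f i) ≤ a * μ (g i))
    (hg : s.PairwiseDisjoint g) (hgm : ∀ i ∈ s, MeasurableSet (g i)) (hE' : ⋃ i ∈ s, g i ⊆ E') :
    μ E ≤ a * μ E' :=
  calc μ E ≤ μ (⋃ i ∈ s, f i) :=
        (measure_mono hE).trans ((measure_union_le _ _).trans_eq (by rw [hN, add_zero]))
    _ ≤ ∑' i : s, μ (f i) := measure_biUnion_le μ hs f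
    _ ≤ ∑' i : s, a * μ (g i) := ENNReal.tsum_le_tsum fun i => hfg i i.2
    _ = a * μ (⋃ i ∈ s, g i) := by rw [ENNReal.tsum_mul_left, measure_biUnion hs hg hgm]
    _ ≤ a * μ E' := by gcongr

section Neighbors

variable {P₀ P₁ : ℝ → ℝ} {X X' : ℕ → ℝ} {i₀ : ℕ}

lemma ell_sub_ell_eq_ite (hX : ∀ m, m ≠ i₀ → X m = X' m) (k j : ℕ) :
    ell P₀ P₁ X' k j - ell P₀ P₁ X k j
      = if i₀ ∈ Finset.Icc k j then
          Real.log (P₁ (X' i₀) / P₀ (X' i₀)) - Real.log (P₁ (X i₀) / P₀ (X i₀)) else 0 := by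
  rw [ell, ell, ← Finset.sum_sub_distrib, ← Finset.sum_ite_eq' (Finset.Icc k j) i₀
    fun m => Real.log (P₁ (X' m) / P₀ (X' m)) - Real.log (P₁ (X m) / P₀ (X m))]
  refine Finset.sum_congr rfl fun m _ => ?_
  by_cases hm : m = i₀
  · simp [hm]
  · simp [hm, hX m hm]

variable {A : ℝ}

lemma abs_ell_sub_ell_le (hX : ∀ m, m ≠ i₀ → X m = X' m)
    (hA : |Real.log (P₁ (X' i₀) / P₀ (X' i₀)) - Real.log (P₁ (X i₀) / P₀ (X i₀))| ≤ A) (k j : ℕ) :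
    |ell P₀ P₁ X' k j - ell P₀ P₁ X k j| ≤ A := by
  rw [ell_sub_ell_eq_ite hX]
  split_ifs
  · exact hA
  · simpa using (abs_nonneg _).trans hA

lemma ell_sub_ell_le (hX : ∀ m, m ≠ i₀ → X m = X' m)
    (hA : |Real.log (P₁ (X' i₀) / P₀ (X' i₀)) - Real.log (P₁ (X i₀) / P₀ (X i₀))| ≤ A)
    (k k' j : ℕ) :
    ell P₀ P₁ X' k j - ell P₀ P₁ X' k' j ≤ ell P₀ P₁ X k j - ell P₀ P₁ X k' j + A := by
  have hk := ell_sub_ell_eq_ite (P₀ := P₀) (P₁ := P₁) hX k j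
  have hk' := ell_sub_ell_eq_ite (P₀ := P₀) (P₁ := P₁) hX k' j
  split_ifs at hk hk' <;> linarith [le_abs_self (Real.log (P₁ (X' i₀) / P₀ (X' i₀)) -
    Real.log (P₁ (X i₀) / P₀ (X i₀))), neg_abs_le (Real.log (P₁ (X' i₀) / P₀ (X' i₀)) -
    Real.log (P₁ (X i₀) / P₀ (X i₀)))]

end Neighbors

/-- Coordinate `.inl ()` is the threshold noise, `.inr (.inl j)` the query noise at time `j`,
`.inr (.inr k)` the offline noise at window position `k`. -/
def noise {Ω : Type*} (ν : Ω → ℝ) (Z W : ℕ → Ω → ℝ) : Unit ⊕ ℕ ⊕ ℕ → Ω → ℝ :=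
  Sum.elim (fun _ => ν) (Sum.elim Z W)

def outputRegion (P₀ P₁ : ℝ → ℝ) (Y : ℕ → ℝ) (n : ℕ) (T : ℝ) (j c : ℕ) :
    Set (Unit ⊕ ℕ ⊕ ℕ → ℝ) :=
  {u | HaltsAt P₀ P₁ Y n T (fun u => u (.inl ())) (fun m u => u (.inr (.inl m))) j u ∧
    c ∈ Finset.Icc 1 n ∧ ∀ k ∈ Finset.Icc 1 n, k ≠ c →
      ell P₀ P₁ Y (j - n + k) j + u (.inr (.inr k)) < ell P₀ P₁ Y (j - n + c) j + u (.inr (.inr c))}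

def noiseShift (A : ℝ) (j c : ℕ) : Unit ⊕ ℕ ⊕ ℕ → ℝ :=
  Sum.elim (fun _ => A) (Sum.elim (Pi.single j (2 * A)) (Pi.single c A))

noncomputable def noiseScale (A ε : ℝ) : Unit ⊕ ℕ ⊕ ℕ → ℝ :=
  Sum.elim (fun _ => 4 * A / ε) (Sum.elim (fun _ => 8 * A / ε) (fun _ => 2 * A / ε))

lemma noiseShift_eq_zero_of_notMem {A : ℝ} {j c : ℕ} {i : Unit ⊕ ℕ ⊕ ℕ}
    (hi : i ∉ ({.inl (), .inr (.inl j), .inr (.inr c)} : Finset (Unit ⊕ ℕ ⊕ ℕ))) :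
    noiseShift A j c i = 0 := by
  rcases i with _ | m | k
  · simp at hi
  · exact Pi.single_eq_of_ne (by simpa using hi) _
  · exact Pi.single_eq_of_ne (by simpa using hi) _

-- The budget splits as ε/4 (threshold) + ε/4 (query at the halting time) + ε/2 (argmax).
lemma sum_abs_noiseShift_div_noiseScale {A ε : ℝ} (hA : 0 < A) (hε : 0 < ε) (j c : ℕ) :
    ∑ i ∈ ({.inl (), .inr (.inl j), .inr (.inr c)} : Finset (Unit ⊕ ℕ ⊕ ℕ)),
      |noiseShift A j c i| / noiseScale A ε i = ε := by
  simp only [noiseScale, noiseShift, Finset.mem_insert, Finset.mem_singleton, reduceCtorEq,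
    Sum.inr.injEq, or_self, not_false_eq_true, Finset.sum_insert, Finset.sum_singleton,
    Sum.elim_inl, Sum.elim_inr, Pi.single_eq_same, abs_of_pos hA, abs_mul, Nat.abs_ofNat]
  field_simp
  ring

section OutputRegion

variable {P₀ P₁ : ℝ → ℝ} {n : ℕ} {T : ℝ}

lemma measurableSet_outputRegion (Y : ℕ → ℝ) (j c : ℕ) :
    MeasurableSet (outputRegion P₀ P₁ Y n T j c) := by
  simp only [outputRegion, HaltsAt, Triggers]
  measurability

lemma pairwise_disjoint_outputRegion (Y : ℕ → ℝ) :
    Pairwise (Function.onFun Disjoint fun p : ℕ × ℕ => outputRegion P₀ P₁ Y n T p.1 p.2) := by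
  rintro ⟨j, c⟩ ⟨j', c'⟩ hne
  refine Set.disjoint_left.mpr ?_
  rintro u ⟨⟨hn, htrig, hquiet⟩, hc, hmax⟩ ⟨⟨hn', htrig', hquiet'⟩, hc', hmax'⟩
  rcases lt_trichotomy j j' with hlt | rfl | hgt
  · exact hquiet' j hn hlt htrig
  · have hcc : c ≠ c' := fun h => hne (by rw [h])
    linarith [hmax c' hc' hcc.symm, hmax' c hc hcc]
  · exact hquiet j' hn' hgt htrig'

lemma add_noiseShift_mem_outputRegion {Y Y' : ℕ → ℝ} {A : ℝ}
    (hsens : ∀ k j, |ell P₀ P₁ Y' k j - ell P₀ P₁ Y k j| ≤ A)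
    (hsens' : ∀ k k' j,
      ell P₀ P₁ Y' k j - ell P₀ P₁ Y' k' j ≤ ell P₀ P₁ Y k j - ell P₀ P₁ Y k' j + A)
    {j c : ℕ} {u : Unit ⊕ ℕ ⊕ ℕ → ℝ} (hu : u ∈ outputRegion P₀ P₁ Y n T j c) :
    u + noiseShift A j c ∈ outputRegion P₀ P₁ Y' n T j c := by
  obtain ⟨⟨hn, ⟨k, hk, htrig⟩, hquiet⟩, hc, hmax⟩ := hu
  refine ⟨⟨hn, ⟨k, hk, ?_⟩, fun j' hj' hj'j ⟨k', hk', htrig'⟩ => ?_⟩, hc, fun k' hk' hk'c => ?_⟩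
  · simp only [Pi.add_apply, noiseShift, Sum.elim_inl, Sum.elim_inr, Pi.single_eq_same]
    linarith [abs_le.mp (hsens k j)]
  · simp only [Pi.add_apply, noiseShift, Sum.elim_inl, Sum.elim_inr,
      Pi.single_eq_of_ne hj'j.ne, add_zero] at htrig'
    exact hquiet j' hj' hj'j ⟨k', hk', by linarith [abs_le.mp (hsens k' j')]⟩
  · simp only [Pi.add_apply, noiseShift, Sum.elim_inr, Pi.single_eq_same,
      Pi.single_eq_of_ne hk'c, add_zero]
    linarith [hsens' (j - n + k') (j - n + c) j, hmax k' hk' hk'c]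

end OutputRegion

section Algorithm

variable {Ω : Type*} {ν : Ω → ℝ} {Z W : ℕ → Ω → ℝ} {P₀ P₁ : ℝ → ℝ} {n : ℕ} {T : ℝ}
  {Y : ℕ → ℝ} {κ : ℕ → Ω → ℕ}

lemma setOf_haltsAt_subset
    (hκ : ∀ j, n ≤ j → ∀ ω, κ j ω ∈ Finset.Icc 1 n ∧ ∀ k ∈ Finset.Icc 1 n,
      ell P₀ P₁ Y (j - n + k) j + W k ω ≤ ell P₀ P₁ Y (j - n + κ j ω) j + W (κ j ω) ω)
    (S : Set (ℕ × ℕ)) :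
    {ω | ∃ j, HaltsAt P₀ P₁ Y n T ν Z j ω ∧ (j, κ j ω + (j - n)) ∈ S}
      ⊆ (⋃ p ∈ {p : ℕ × ℕ | (p.1, p.2 + (p.1 - n)) ∈ S},
          {ω | (fun i => noise ν Z W i ω) ∈ outputRegion P₀ P₁ Y n T p.1 p.2}) ∪
        {ω | ∃ j, ∃ k ∈ Finset.Icc 1 n, ∃ c ∈ Finset.Icc 1 n, k ≠ c ∧
          ell P₀ P₁ Y (j - n + k) j + W k ω = ell P₀ P₁ Y (j - n + c) j + W c ω} := by
  rintro ω ⟨j, hhalt, hS⟩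
  obtain ⟨hκmem, hκmax⟩ := hκ j hhalt.1 ω
  by_cases htie : ∃ k ∈ Finset.Icc 1 n, k ≠ κ j ω ∧
      ell P₀ P₁ Y (j - n + k) j + W k ω = ell P₀ P₁ Y (j - n + κ j ω) j + W (κ j ω) ω
  · obtain ⟨k, hk, hne, heq⟩ := htie
    exact Or.inr ⟨j, k, hk, κ j ω, hκmem, hne, heq⟩
  push Not at htie
  exact Or.inl (Set.mem_biUnion (x := (j, κ j ω)) hS
    ⟨hhalt, hκmem, fun k hk hne => (hκmax k hk).lt_of_ne (htie k hk hne)⟩)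

lemma biUnion_outputRegion_subset
    (hκ : ∀ j, n ≤ j → ∀ ω, κ j ω ∈ Finset.Icc 1 n ∧ ∀ k ∈ Finset.Icc 1 n,
      ell P₀ P₁ Y (j - n + k) j + W k ω ≤ ell P₀ P₁ Y (j - n + κ j ω) j + W (κ j ω) ω)
    (S : Set (ℕ × ℕ)) :
    ⋃ p ∈ {p : ℕ × ℕ | (p.1, p.2 + (p.1 - n)) ∈ S},
        {ω | (fun i => noise ν Z W i ω) ∈ outputRegion P₀ P₁ Y n T p.1 p.2}
      ⊆ {ω | ∃ j, HaltsAt P₀ P₁ Y n T ν Z j ω ∧ (j, κ j ω + (j - n)) ∈ S} := by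
  simp only [Set.iUnion_subset_iff]
  rintro ⟨j, c⟩ hS ω ⟨hhalt, hc, hmax⟩
  have hκc : κ j ω = c := by
    obtain ⟨hκmem, hκmax⟩ := hκ j hhalt.1 ω
    by_contra hne
    dsimp only [noise, Sum.elim_inr] at hmax
    linarith [hmax _ hκmem hne, hκmax c hc]
  exact ⟨j, hhalt, hκc ▸ hS⟩

variable [MeasurableSpace Ω] {μ : Measure Ω}

lemma measurable_noise (hν : Measurable ν) (hZ : ∀ j, Measurable (Z j))
    (hW : ∀ k, Measurable (W k)) (i : Unit ⊕ ℕ ⊕ ℕ) : Measurable (noise ν Z W i) := by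
  rcases i with _ | j | k
  exacts [hν, hZ j, hW k]

lemma measure_outputRegion_le [IsProbabilityMeasure μ] (hν : Measurable ν)
    (hZ : ∀ j, Measurable (Z j)) (hW : ∀ k, Measurable (W k)) (hind : iIndepFun (noise ν Z W) μ)
    {A ε : ℝ} (hε : 0 < ε) (hνlaw : μ.map ν = laplaceMeasure (4 * A / ε))
    (hZlaw : ∀ j, n ≤ j → μ.map (Z j) = laplaceMeasure (8 * A / ε))
    (hWlaw : ∀ k ∈ Finset.Icc 1 n, μ.map (W k) = laplaceMeasure (2 * A / ε)) {Y Y' : ℕ → ℝ}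
    (hsens : ∀ k j, |ell P₀ P₁ Y' k j - ell P₀ P₁ Y k j| ≤ A)
    (hsens' : ∀ k k' j,
      ell P₀ P₁ Y' k j - ell P₀ P₁ Y' k' j ≤ ell P₀ P₁ Y k j - ell P₀ P₁ Y k' j + A)
    (j c : ℕ) :
    μ {ω | (fun i => noise ν Z W i ω) ∈ outputRegion P₀ P₁ Y n T j c}
      ≤ ENNReal.ofReal (Real.exp ε) *
        μ {ω | (fun i => noise ν Z W i ω) ∈ outputRegion P₀ P₁ Y' n T j c} := by
  by_cases hjc : n ≤ j ∧ c ∈ Finset.Icc 1 n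
  swap
  · have hempty : {ω | (fun i => noise ν Z W i ω) ∈ outputRegion P₀ P₁ Y n T j c} = ∅ :=
      Set.eq_empty_of_forall_notMem fun ω hω => hjc ⟨hω.1.1, hω.2.1⟩
    simp [hempty]
  obtain ⟨hj, hc⟩ := hjc
  have hA : 0 < A := by
    have := pos_of_map_eq_laplaceMeasure hν.aemeasurable hνlaw
    have : 0 < 4 * A := (div_pos_iff_of_pos_right hε).mp this
    linarith
  let s : Finset (Unit ⊕ ℕ ⊕ ℕ) := {.inl (), .inr (.inl j), .inr (.inr c)}
  have hscale : ∀ i ∈ s, 0 < noiseScale A ε i := by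
    simp only [s, Finset.mem_insert, Finset.mem_singleton]
    rintro i (rfl | rfl | rfl) <;> simp only [noiseScale, Sum.elim_inl, Sum.elim_inr] <;> positivity
  have hlaw : ∀ i ∈ s, μ.map (noise ν Z W i) = laplaceMeasure (noiseScale A ε i) := by
    simp only [s, Finset.mem_insert, Finset.mem_singleton]
    rintro i (rfl | rfl | rfl)
    exacts [hνlaw, hZlaw j hj, hWlaw c hc]
  calc μ {ω | (fun i => noise ν Z W i ω) ∈ outputRegion P₀ P₁ Y n T j c}
      ≤ μ {ω | (fun i => noise ν Z W i ω + noiseShift A j c i) ∈ outputRegion P₀ P₁ Y' n T j c} :=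
        measure_mono fun ω hω => add_noiseShift_mem_outputRegion hsens hsens' hω
    _ ≤ _ := hind.measure_add_le (measurable_noise hν hZ hW) s hscale hlaw
        (fun _ => noiseShift_eq_zero_of_notMem) (measurableSet_outputRegion Y' j c)
    _ = _ := by rw [sum_abs_noiseShift_div_noiseScale hA hε]

lemma measure_exists_tie_eq_zero [IsFiniteMeasure μ] (hW : ∀ k, Measurable (W k))
    (hind : ∀ k c, k ≠ c → IndepFun (W k) (W c) μ) (s : Finset ℕ)
    (hatom : ∀ c ∈ s, NullSingletonClass (μ.map (W c))) (a : ℕ → ℕ → ℝ) :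
    μ {ω | ∃ j, ∃ k ∈ s, ∃ c ∈ s, k ≠ c ∧ a j k + W k ω = a j c + W c ω} = 0 := by
  refine measure_mono_null (t := ⋃ j, ⋃ k, ⋃ c,
    {ω | c ∈ s ∧ k ≠ c ∧ W k ω - W c ω = a j c - a j k}) ?_ ?_
  · rintro ω ⟨j, k, -, c, hc, hkc, htie⟩
    simp only [Set.mem_iUnion]
    exact ⟨j, k, c, hc, hkc, by linarith⟩
  refine measure_iUnion_null fun j => measure_iUnion_null fun k => measure_iUnion_null fun c => ?_
  by_cases hkc : c ∈ s ∧ k ≠ c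
  · have := hatom c hkc.1
    exact measure_mono_null (fun ω hω => hω.2.2)
      ((hind k c hkc.2).measure_setOf_sub_eq_eq_zero (hW k) (hW c) _)
  · exact measure_mono_null (fun ω hω => hkc ⟨hω.1, hω.2.1⟩) measure_empty

end Algorithm

theorem onlinePCPD_privacy_general
    {Ω : Type*} [MeasurableSpace Ω] (Prb : Measure Ω) [IsProbabilityMeasure Prb]
    (P₀ P₁ : ℝ → ℝ)
    (hbddAbove : BddAbove (Set.range fun x => Real.log (P₁ x / P₀ x)))
    (hbddBelow : BddBelow (Set.range fun x => Real.log (P₁ x / P₀ x)))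
    (A : ℝ)
    (hA : A = sSup (Set.range fun x => Real.log (P₁ x / P₀ x))
            - sInf (Set.range fun x => Real.log (P₁ x / P₀ x)))
    (ε : ℝ) (hε : 0 < ε) (n : ℕ) (T : ℝ)
    (X X' : ℕ → ℝ)
    (hneighbor : ∃ j, ∀ m, m ≠ j → X m = X' m)
    (ν : Ω → ℝ) (Z W : ℕ → Ω → ℝ)
    (hνmeas : Measurable ν) (hZmeas : ∀ j, Measurable (Z j))
    (hWmeas : ∀ k, Measurable (W k))
    (hindep : iIndepFun
        (Sum.elim (fun _ : Unit => ν) (Sum.elim Z W)) Prb)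
    (hνlaw : Measure.map ν Prb = laplaceMeasure (4 * A / ε))
    (hZlaw : ∀ j, n ≤ j → Measure.map (Z j) Prb = laplaceMeasure (8 * A / ε))
    (hWlaw : ∀ k ∈ Finset.Icc 1 n, Measure.map (W k) Prb = laplaceMeasure (2 * A / ε))
    (κ κ' : ℕ → Ω → ℕ)
    (hκ : ∀ j, n ≤ j → ∀ ω, κ j ω ∈ Finset.Icc 1 n ∧ ∀ k ∈ Finset.Icc 1 n,
        ell P₀ P₁ X (j - n + k) j + W k ω
          ≤ ell P₀ P₁ X (j - n + κ j ω) j + W (κ j ω) ω)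
    (hκ' : ∀ j, n ≤ j → ∀ ω, κ' j ω ∈ Finset.Icc 1 n ∧ ∀ k ∈ Finset.Icc 1 n,
        ell P₀ P₁ X' (j - n + k) j + W k ω
          ≤ ell P₀ P₁ X' (j - n + κ' j ω) j + W (κ' j ω) ω)
    (S : Set (ℕ × ℕ)) :
    Prb {ω | ∃ j, HaltsAt P₀ P₁ X n T ν Z j ω ∧ (j, κ j ω + (j - n)) ∈ S}
      ≤ ENNReal.ofReal (Real.exp ε) *
        Prb {ω | ∃ j, HaltsAt P₀ P₁ X' n T ν Z j ω ∧ (j, κ' j ω + (j - n)) ∈ S} := by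
  obtain ⟨i₀, hXX'⟩ := hneighbor
  have hlog : |Real.log (P₁ (X' i₀) / P₀ (X' i₀)) - Real.log (P₁ (X i₀) / P₀ (X i₀))| ≤ A :=
    hA ▸ abs_sub_le_csSup_sub_csInf hbddBelow hbddAbove _ _
  have hnoise : Measurable fun ω i => noise ν Z W i ω :=
    measurable_pi_lambda _ (measurable_noise hνmeas hZmeas hWmeas)
  refine measure_le_mul_of_subset_biUnion (Set.to_countable _) (setOf_haltsAt_subset hκ S) ?_
    (fun p _ => measure_outputRegion_le hνmeas hZmeas hWmeas hindep hε hνlaw hZlaw hWlaw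
      (abs_ell_sub_ell_le hXX' hlog) (ell_sub_ell_le hXX' hlog) p.1 p.2)
    (fun p _ q _ hpq => (pairwise_disjoint_outputRegion X' hpq).preimage _)
    (fun p _ => hnoise (measurableSet_outputRegion X' p.1 p.2)) (biUnion_outputRegion_subset hκ' S)
  exact measure_exists_tie_eq_zero hWmeas
    (fun k c hkc => hindep.indepFun (i := .inr (.inr k)) (j := .inr (.inr c)) (by simpa using hkc))
    _ (fun c hc => hWlaw c hc ▸ inferInstance) _

/-- Theorem 8 of the paper: `OnlinePCPD` is `(ε,0)`-differentially
private for arbitrary neighboring streams `X, X'`.  The algorithm's randomness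
consists of the threshold noise `ν ~ Lap(4A/ε)`, per-query noise `Z_j ~ Lap(8A/ε)`,
and the offline call's noise `W_1,…,W_n ~ Lap(2A/ε)` (privacy parameter `ε/2`), all
jointly independent.  `κ j` (resp. `κ' j`) selects the argmax of the offline call on
the window `{x_{j-n+1},…,x_j}`, so that the full output (halting time together with
the reported change point `κ j + (j-n)`) satisfies, for every set `S` of outputs,
`Pr[out(X) ∈ S] ≤ e^ε · Pr[out(X') ∈ S]`. -/
theorem onlinePCPD_privacy
    {Ω : Type*} [MeasurableSpace Ω] (Prb : Measure Ω) [IsProbabilityMeasure Prb]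
    (P₀ P₁ : ℝ → ℝ) (hP₀ : IsDensity P₀) (hP₁ : IsDensity P₁)
    (hbddAbove : BddAbove (Set.range fun x => Real.log (P₁ x / P₀ x)))
    (hbddBelow : BddBelow (Set.range fun x => Real.log (P₁ x / P₀ x)))
    (A : ℝ)
    (hA : A = sSup (Set.range fun x => Real.log (P₁ x / P₀ x))
            - sInf (Set.range fun x => Real.log (P₁ x / P₀ x)))
    (ε : ℝ) (hε : 0 < ε) (n : ℕ) (hn : 1 ≤ n) (T : ℝ)
    (X X' : ℕ → ℝ)
    (hneighbor : ∃ j, ∀ m, m ≠ j → X m = X' m)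
    (ν : Ω → ℝ) (Z W : ℕ → Ω → ℝ)
    (hνmeas : Measurable ν) (hZmeas : ∀ j, Measurable (Z j))
    (hWmeas : ∀ k, Measurable (W k))
    (hindep : iIndepFun
        (Sum.elim (fun _ : Unit => ν) (Sum.elim Z W)) Prb)
    (hνlaw : Measure.map ν Prb = laplaceMeasure (4 * A / ε))
    (hZlaw : ∀ j, n ≤ j → Measure.map (Z j) Prb = laplaceMeasure (8 * A / ε))
    (hWlaw : ∀ k ∈ Finset.Icc 1 n, Measure.map (W k) Prb = laplaceMeasure (2 * A / ε))
    (κ κ' : ℕ → Ω → ℕ)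
    (hκ : ∀ j, n ≤ j → ∀ ω, κ j ω ∈ Finset.Icc 1 n ∧ ∀ k ∈ Finset.Icc 1 n,
        ell P₀ P₁ X (j - n + k) j + W k ω
          ≤ ell P₀ P₁ X (j - n + κ j ω) j + W (κ j ω) ω)
    (hκ' : ∀ j, n ≤ j → ∀ ω, κ' j ω ∈ Finset.Icc 1 n ∧ ∀ k ∈ Finset.Icc 1 n,
        ell P₀ P₁ X' (j - n + k) j + W k ω
          ≤ ell P₀ P₁ X' (j - n + κ' j ω) j + W (κ' j ω) ω)
    (S : Set (ℕ × ℕ)) :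
    Prb {ω | ∃ j, HaltsAt P₀ P₁ X n T ν Z j ω ∧ (j, κ j ω + (j - n)) ∈ S}
      ≤ ENNReal.ofReal (Real.exp ε) *
        Prb {ω | ∃ j, HaltsAt P₀ P₁ X' n T ν Z j ω ∧ (j, κ' j ω + (j - n)) ∈ S} :=
  onlinePCPD_privacy_general Prb P₀ P₁ hbddAbove hbddBelow A hA ε hε n T X X' hneighbor ν Z W hνmeas
    hZmeas hWmeas hindep hνlaw hZlaw hWlaw κ κ' hκ hκ' S
end

section
/- Let P_0, P_1 be probability densities, fix i ∈ {0,1}, and let x ~ P_i. Define Y = −log(2P_i(x)/(P_0(x)+P_1(x))) and U = Y − E[Y] = Y + D_KL(P_i || (P_0+P_1)/2). Then E[exp(|U|) − 1 − |U|] ≤ 2. In particular, with D = D_KL(P_i||(P_0+P_1)/2), E[exp(|U|)] ≤ e^{−D} + 2e^{D}. -/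
/-! With `Q = (P₀ + P₁) / 2` the ratio `r = 2 P / (P₀ + P₁) = P / Q` satisfies
`0 ≤ r ≤ 2`, and `U = -log r + D`. Hence `E_P[e^U] = e^D E_P[1/r] ≤ e^D ∫ Q = e^D` and
`E_P[e^{-U}] = e^{-D} E_P[r] ≤ 2 e^{-D}`; both claims follow from `e^{|U|} ≤ e^U + e^{-U}`
once `0 ≤ D ≤ log 2`, which comes from `P - Q ≤ P log r ≤ P log 2` pointwise. -/

open MeasureTheory ProbabilityTheory

/-- The measure on `ℝ` with density `P` with respect to Lebesgue measure. -/
noncomputable def densityMeasure (P : ℝ → ℝ) : Measure ℝ :=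
  volume.withDensity fun x => ENNReal.ofReal (P x)

/-- The Kullback–Leibler divergence `D_KL(P‖Q) = E_{x~P}[log (P x / Q x)]`. -/
noncomputable def klDivR (P Q : ℝ → ℝ) : ℝ :=
  ∫ x, P x * Real.log (P x / Q x)

open Real

section LikelihoodRatio

variable {a b c : ℝ}

lemma pos_of_le_mul_of_pos (hb : 0 ≤ b) (hab : a ≤ c * b) (ha : 0 < a) : 0 < b := by
  rcases hb.eq_or_lt with rfl | hb
  · linarith [mul_zero c]
  · exact hb

lemma sub_le_mul_log_div (ha : 0 ≤ a) (hb : 0 ≤ b) (hab : a ≤ c * b) :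
    a - b ≤ a * log (a / b) := by
  rcases ha.eq_or_lt with rfl | ha
  · simpa using hb
  have hb := pos_of_le_mul_of_pos hb hab ha
  have := one_sub_inv_le_log_of_pos (div_pos ha hb)
  rw [inv_div] at this
  calc a - b = a * (1 - b / a) := by field_simp
    _ ≤ a * log (a / b) := by gcongr

lemma mul_log_div_le (ha : 0 ≤ a) (hb : 0 ≤ b) (hab : a ≤ c * b) :
    a * log (a / b) ≤ a * log c := by
  rcases ha.eq_or_lt with rfl | ha
  · simp
  have hb := pos_of_le_mul_of_pos hb hab ha
  gcongr
  rwa [div_le_iff₀ hb]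

lemma mul_exp_neg_log_div_le (ha : 0 ≤ a) (hb : 0 ≤ b) (hab : a ≤ c * b) :
    a * exp (-log (a / b)) ≤ b := by
  rcases ha.eq_or_lt with rfl | ha
  · simpa using hb
  have hb := pos_of_le_mul_of_pos hb hab ha
  rw [exp_neg, exp_log (div_pos ha hb), inv_div, mul_div_cancel₀ b ha.ne']

lemma mul_exp_log_div_le (ha : 0 ≤ a) (hb : 0 ≤ b) (hab : a ≤ c * b) :
    a * exp (log (a / b)) ≤ c * a := by
  rcases ha.eq_or_lt with rfl | ha
  · simp
  have hb := pos_of_le_mul_of_pos hb hab ha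
  rw [exp_log (div_pos ha hb), mul_comm c]
  gcongr
  rwa [div_le_iff₀ hb]

lemma mul_exp_add_exp_neg_le (ha : 0 ≤ a) (hb : 0 ≤ b) (hab : a ≤ c * b) (d : ℝ) :
    a * (exp (-log (a / b) + d) + exp (-(-log (a / b) + d))) ≤ exp d * b + c * exp (-d) * a := by
  have h₁ := mul_exp_neg_log_div_le ha hb hab
  have h₂ := mul_exp_log_div_le ha hb hab
  rw [neg_add, neg_neg, exp_add, exp_add]
  calc a * (exp (-log (a / b)) * exp d + exp (log (a / b)) * exp (-d))
      = exp d * (a * exp (-log (a / b))) + exp (-d) * (a * exp (log (a / b))) := by ring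
    _ ≤ exp d * b + exp (-d) * (c * a) := by gcongr
    _ = exp d * b + c * exp (-d) * a := by ring

end LikelihoodRatio

lemma exp_abs_le_exp_add_exp_neg (t : ℝ) : exp |t| ≤ exp t + exp (-t) := by
  rcases abs_cases t with ⟨h, _⟩ | ⟨h, _⟩ <;> rw [h] <;> linarith [exp_pos t, exp_pos (-t)]

lemma exp_abs_sub_one_sub_abs_le (t : ℝ) : exp |t| - 1 - |t| ≤ exp t + exp (-t) - 2 := by
  rcases abs_cases t with ⟨h, _⟩ | ⟨h, _⟩ <;> rw [h] <;>
    linarith [add_one_le_exp t, add_one_le_exp (-t)]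

section Integrals

variable {α : Type*} [MeasurableSpace α] {μ : Measure α} {p q : α → ℝ} {c : ℝ}

lemma integrable_mul_log_div (hpi : Integrable p μ) (hqi : Integrable q μ)
    (hp : ∀ x, 0 ≤ p x) (hq : ∀ x, 0 ≤ q x) (hpq : ∀ x, p x ≤ c * q x) :
    Integrable (fun x => p x * log (p x / q x)) μ := by
  have hmeas : AEStronglyMeasurable (fun x => p x * log (p x / q x)) μ :=
    (hpi.aemeasurable.mul (measurable_log.comp_aemeasurable
      (hpi.aemeasurable.div hqi.aemeasurable))).aestronglyMeasurable
  refine Integrable.mono' (g := fun x => q x + p x * |log c|) (hqi.add (hpi.mul_const _)) hmeas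
    (ae_of_all _ fun x => ?_)
  have hlow := sub_le_mul_log_div (hp x) (hq x) (hpq x)
  have hup := mul_log_div_le (hp x) (hq x) (hpq x)
  have : p x * log c ≤ p x * |log c| := mul_le_mul_of_nonneg_left (le_abs_self _) (hp x)
  rw [norm_eq_abs, abs_le]
  constructor <;> linarith [hp x, hq x, mul_nonneg (hp x) (abs_nonneg (log c))]

lemma integral_mul_log_div_nonneg (hpi : Integrable p μ) (hqi : Integrable q μ)
    (hp : ∀ x, 0 ≤ p x) (hq : ∀ x, 0 ≤ q x) (hpq : ∀ x, p x ≤ c * q x)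
    (hqp : ∫ x, q x ∂μ ≤ ∫ x, p x ∂μ) :
    0 ≤ ∫ x, p x * log (p x / q x) ∂μ := by
  have := integral_mono (f := fun x => p x - q x) (hpi.sub hqi)
    (integrable_mul_log_div hpi hqi hp hq hpq) fun x => sub_le_mul_log_div (hp x) (hq x) (hpq x)
  rw [integral_sub hpi hqi] at this
  linarith

lemma integral_mul_log_div_le (hpi : Integrable p μ) (hqi : Integrable q μ)
    (hp : ∀ x, 0 ≤ p x) (hq : ∀ x, 0 ≤ q x) (hpq : ∀ x, p x ≤ c * q x)
    (hp1 : ∫ x, p x ∂μ = 1) :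
    ∫ x, p x * log (p x / q x) ∂μ ≤ log c := by
  have := integral_mono (integrable_mul_log_div hpi hqi hp hq hpq) (hpi.mul_const (log c))
    fun x => mul_log_div_le (hp x) (hq x) (hpq x)
  rwa [integral_mul_const, hp1, one_mul] at this

lemma integral_mul_exp_abs_le (hpi : Integrable p μ) (hqi : Integrable q μ)
    (hp : ∀ x, 0 ≤ p x) (hq : ∀ x, 0 ≤ q x) (hpq : ∀ x, p x ≤ c * q x) (d : ℝ) :
    ∫ x, p x * exp |-log (p x / q x) + d| ∂μ
      ≤ exp d * ∫ x, q x ∂μ + c * exp (-d) * ∫ x, p x ∂μ := by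
  rw [← integral_const_mul, ← integral_const_mul, ← integral_add (hqi.const_mul _)
    (hpi.const_mul _)]
  refine integral_mono_of_nonneg (ae_of_all _ fun x => mul_nonneg (hp x) (exp_pos _).le)
    ((hqi.const_mul _).add (hpi.const_mul _)) (ae_of_all _ fun x => ?_)
  calc p x * exp |-log (p x / q x) + d|
      ≤ p x * (exp (-log (p x / q x) + d) + exp (-(-log (p x / q x) + d))) :=
        mul_le_mul_of_nonneg_left (exp_abs_le_exp_add_exp_neg _) (hp x)
    _ ≤ _ := mul_exp_add_exp_neg_le (hp x) (hq x) (hpq x) d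

lemma integral_mul_exp_abs_sub_one_sub_abs_le (hpi : Integrable p μ) (hqi : Integrable q μ)
    (hp : ∀ x, 0 ≤ p x) (hq : ∀ x, 0 ≤ q x) (hpq : ∀ x, p x ≤ c * q x) (d : ℝ) :
    ∫ x, p x * (exp |-log (p x / q x) + d| - 1 - |-log (p x / q x) + d|) ∂μ
      ≤ exp d * ∫ x, q x ∂μ + c * exp (-d) * ∫ x, p x ∂μ - 2 * ∫ x, p x ∂μ := by
  have hg : Integrable (fun x => exp d * q x + c * exp (-d) * p x) μ :=
    (hqi.const_mul _).add (hpi.const_mul _)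
  rw [← integral_const_mul, ← integral_const_mul, ← integral_const_mul, ← integral_add
    (hqi.const_mul _) (hpi.const_mul _), ← integral_sub hg (hpi.const_mul _)]
  refine integral_mono_of_nonneg (ae_of_all _ fun x => ?_) (hg.sub (hpi.const_mul _))
    (ae_of_all _ fun x => ?_)
  · exact mul_nonneg (hp x) (by linarith [add_one_le_exp |-log (p x / q x) + d|])
  · have := mul_le_mul_of_nonneg_left (exp_abs_sub_one_sub_abs_le (-log (p x / q x) + d)) (hp x)
    linarith [mul_exp_add_exp_neg_le (hp x) (hq x) (hpq x) d]

end Integrals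

lemma integral_densityMeasure {P : ℝ → ℝ} (hP : Measurable P) (hP0 : ∀ x, 0 ≤ P x)
    (g : ℝ → ℝ) : ∫ x, g x ∂densityMeasure P = ∫ x, P x * g x := by
  rw [densityMeasure, integral_withDensity_eq_integral_toReal_smul hP.ennreal_ofReal
    (ae_of_all _ fun _ => ENNReal.ofReal_lt_top)]
  simp only [ENNReal.toReal_ofReal (hP0 _), smul_eq_mul]

namespace IsDensity

variable {P P₀ P₁ : ℝ → ℝ}

lemma integrable (hP : IsDensity P) : Integrable P :=
  Integrable.of_integral_ne_zero (by rw [hP.integral_one]; exact one_ne_zero)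

lemma midpoint (hP₀ : IsDensity P₀) (hP₁ : IsDensity P₁) :
    IsDensity fun x => (P₀ x + P₁ x) / 2 where
  measurable := (hP₀.measurable.add hP₁.measurable).div_const 2
  nonneg x := by linarith [hP₀.nonneg x, hP₁.nonneg x]
  integral_one := by
    rw [integral_div, integral_add hP₀.integrable hP₁.integrable, hP₀.integral_one,
      hP₁.integral_one]
    norm_num

end IsDensity

/-- the Bernstein moment condition for the mixture log-likelihood
ratio.  Fix `i ∈ {0,1}` and let `x ~ P_i` (here `P ∈ {P₀, P₁}`).  With
`Y = -log (2 P x / (P₀ x + P₁ x))`, `D = D_KL(P_i‖(P₀+P₁)/2)`, and `U = Y + D`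
(so `U = Y - E[Y]`), one has `E[exp |U| - 1 - |U|] ≤ 2` and, in particular,
`E[exp |U|] ≤ e^{-D} + 2 e^{D}`. -/
theorem bernstein_moment_condition (P₀ P₁ P : ℝ → ℝ)
    (hP₀ : IsDensity P₀) (hP₁ : IsDensity P₁) (hP : P = P₀ ∨ P = P₁) :
    (∫ x, (Real.exp |(-Real.log (2 * P x / (P₀ x + P₁ x)))
              + klDivR P (fun y => (P₀ y + P₁ y) / 2)|
          - 1
          - |(-Real.log (2 * P x / (P₀ x + P₁ x)))
              + klDivR P (fun y => (P₀ y + P₁ y) / 2)|) ∂(densityMeasure P)) ≤ 2 ∧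
    (∫ x, Real.exp |(-Real.log (2 * P x / (P₀ x + P₁ x)))
              + klDivR P (fun y => (P₀ y + P₁ y) / 2)| ∂(densityMeasure P))
      ≤ Real.exp (-(klDivR P (fun y => (P₀ y + P₁ y) / 2)))
        + 2 * Real.exp (klDivR P (fun y => (P₀ y + P₁ y) / 2)) := by
  set Q : ℝ → ℝ := fun y => (P₀ y + P₁ y) / 2
  set D := klDivR P Q
  have hPd : IsDensity P := by rcases hP with rfl | rfl <;> assumption
  have hQd : IsDensity Q := hP₀.midpoint hP₁
  have hPQ : ∀ x, P x ≤ 2 * Q x := fun x => by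
    show P x ≤ 2 * ((P₀ x + P₁ x) / 2)
    rcases hP with rfl | rfl <;> linarith [hP₀.nonneg x, hP₁.nonneg x]
  have hratio : ∀ x, 2 * P x / (P₀ x + P₁ x) = P x / Q x := fun x => by
    rw [div_div_eq_mul_div, mul_comm]
  have hD0 : 0 ≤ D :=
    integral_mul_log_div_nonneg hPd.integrable hQd.integrable hPd.nonneg hQd.nonneg hPQ
      (by rw [hPd.integral_one, hQd.integral_one])
  have hD2 : D ≤ log 2 :=
    integral_mul_log_div_le hPd.integrable hQd.integrable hPd.nonneg hQd.nonneg hPQ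
      hPd.integral_one
  have hexpD : exp D ≤ 2 := (exp_le_exp.2 hD2).trans_eq (exp_log two_pos)
  have hexp_negD : exp (-D) ≤ 1 := exp_le_one_iff.2 (neg_nonpos.2 hD0)
  have hexp_le : exp (-D) ≤ exp D := exp_le_exp.2 (neg_le_self hD0)
  simp only [hratio, integral_densityMeasure hPd.measurable hPd.nonneg]
  constructor
  · refine (integral_mul_exp_abs_sub_one_sub_abs_le hPd.integrable hQd.integrable hPd.nonneg
      hQd.nonneg hPQ D).trans ?_
    rw [hPd.integral_one, hQd.integral_one]
    linarith
  · refine (integral_mul_exp_abs_le hPd.integrable hQd.integrable hPd.nonneg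
      hQd.nonneg hPQ D).trans ?_
    rw [hPd.integral_one, hQd.integral_one]
    linarith
end
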